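/- Let d₁, d₂, d₃ be even integers with dᵢ ≥ 4. Then for every α > 0 there exist β > 0 and C > 0 (depending on α and the dᵢ) such that for every c ∈ ℝ with |c| > 1: ∫_{|a| ≥ |c|^α} max(1, |a₁|)^{1−d₁/2} · max(1, |[a]/c|, |a|)^{1−d₂/2−d₃/2} · {a}^{d/2−1} d^×a ≤ C · |c|^{−β}, where the integral is over a ∈ (ℝ^×)³ with |a| = max(|a₁|,|a₂|,|a₃|) ≥ |c|^α. (Corollary 9.12 of the paper, archimedean case F = ℝ.) -/

import Mathlib

open MeasureTheory

noncomputable section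

/-- The multiplicative Haar measure `d^×a = da/|a|` on `ℝ^× = ℝ ∖ {0}`. -/
def mulHaar : Measure ℝ := volume.withDensity fun a => ENNReal.ofReal |a|⁻¹

/-- The product measure `d^×a₁ d^×a₂ d^×a₃` on `(ℝ^×)³`. -/
def mulHaar3 : Measure (ℝ × ℝ × ℝ) := mulHaar.prod (mulHaar.prod mulHaar)

/-! Write `q_i = d_i/2 ≥ 2`, `B_i = max 1 |a_i|`, and let `M ≥ max 1 |a|` be the middle factor.
The integrand is `(|a₁|/B₁)^(q₁-1) (|a₂|/M)^(q₂-1) (|a₃|/M)^(q₃-1) M⁻¹`. The three ratios lie in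
`[0, 1]` and their exponents are `≥ 1`, so each factor is at most `|a_i|/B_i`; on `|a| ≥ T := |c|^α`
the remaining factor satisfies `M⁻¹ ≤ |a|⁻¹ ≤ T^(-1/2) (B₁B₂B₃)^(-1/6)`. Hence the integrand is at
most `T^(-1/2) ∏ |a_i| B_i^(-7/6)`, and `|t| max(1,|t|)^(-7/6)` has finite `d^×t`-integral,
which gives `β = α/2`. -/

open Real

instance : SigmaFinite mulHaar := by
  unfold mulHaar; infer_instance

lemma rpow_neg_max_one_abs_le {r : ℝ} (hr : 0 ≤ r) (t : ℝ) :
    max 1 |t| ^ (-r) ≤ 2 ^ r * (1 + ‖t‖) ^ (-r) := by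
  have hB : 0 < max 1 |t| := lt_max_of_lt_left one_pos
  calc max 1 |t| ^ (-r) = 2 ^ r * (2 * max 1 |t|) ^ (-r) := by
        rw [mul_rpow zero_le_two hB.le, rpow_neg zero_le_two, mul_inv_cancel_left₀ (by positivity)]
    _ ≤ 2 ^ r * (1 + ‖t‖) ^ (-r) := by
        refine mul_le_mul_of_nonneg_left (rpow_le_rpow_of_nonpos (by positivity)
          (by rw [Real.norm_eq_abs]; linarith [le_max_left 1 |t|, le_max_right 1 |t|])
          (neg_nonpos.2 hr)) (by positivity)

lemma lintegral_abs_mul_max_one_rpow_neg_lt_top {r : ℝ} (hr : 1 < r) :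
    ∫⁻ t, ENNReal.ofReal (|t| * max 1 |t| ^ (-r)) ∂mulHaar < ⊤ := by
  have hmaj : Integrable (fun t : ℝ => 2 ^ r * (1 + ‖t‖) ^ (-r)) :=
    (integrable_one_add_norm (by simpa using hr)).const_mul _
  rw [mulHaar, lintegral_withDensity_eq_lintegral_mul _ (by fun_prop) (by fun_prop)]
  refine lt_of_le_of_lt (lintegral_mono fun t => ?_) hmaj.lintegral_lt_top
  rw [Pi.mul_apply, ← ENNReal.ofReal_mul (by positivity), ← mul_assoc]
  refine ENNReal.ofReal_le_ofReal ((mul_le_of_le_one_left (by positivity) ?_).trans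
    (rpow_neg_max_one_abs_le (by linarith) t))
  exact inv_mul_le_one_of_le₀ le_rfl (abs_nonneg t)

lemma lintegral_mulHaar3_mul {f g h : ℝ → ENNReal} (hf : AEMeasurable f mulHaar)
    (hg : AEMeasurable g mulHaar) (hh : AEMeasurable h mulHaar) :
    ∫⁻ a, f a.1 * (g a.2.1 * h a.2.2) ∂mulHaar3 =
      (∫⁻ t, f t ∂mulHaar) * ((∫⁻ t, g t ∂mulHaar) * ∫⁻ t, h t ∂mulHaar) := by
  rw [mulHaar3, lintegral_prod_mul (g := fun b : ℝ × ℝ => g b.1 * h b.2) hf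
    (hg.comp_fst.mul hh.comp_snd), lintegral_prod_mul hg hh]

lemma abs_rpow_mul_rpow_neg_le {B p : ℝ} (t : ℝ) (hp : 1 ≤ p) (hB : max 1 |t| ≤ B) :
    |t| ^ p * B ^ (-p) ≤ |t| / max 1 |t| := by
  have hB0 : 0 < B := (lt_max_of_lt_left one_pos).trans_le hB
  calc |t| ^ p * B ^ (-p) = (|t| / B) ^ p := by
        rw [div_rpow (abs_nonneg t) hB0.le, rpow_neg hB0.le, div_eq_mul_inv]
    _ ≤ |t| / B :=
        rpow_le_self_of_le_one (by positivity)
          ((div_le_one hB0).2 ((le_max_right _ _).trans hB)) hp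
    _ ≤ |t| / max 1 |t| :=
        div_le_div_of_nonneg_left (abs_nonneg t) (lt_max_of_lt_left one_pos) hB

lemma inv_le_rpow_neg_half_mul {T m B₁ B₂ B₃ : ℝ} (hT : 0 < T) (hTm : T ≤ m)
    (hB₁ : 0 < B₁) (hB₁m : B₁ ≤ m) (hB₂ : 0 < B₂) (hB₂m : B₂ ≤ m)
    (hB₃ : 0 < B₃) (hB₃m : B₃ ≤ m) :
    m⁻¹ ≤ T ^ (-(1 / 2) : ℝ) *
      (B₁ ^ (-(1 / 6) : ℝ) * (B₂ ^ (-(1 / 6) : ℝ) * B₃ ^ (-(1 / 6) : ℝ))) := by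
  have hm : 0 < m := hT.trans_le hTm
  have hsplit : m⁻¹ = m ^ (-(1 / 2) : ℝ) *
      (m ^ (-(1 / 6) : ℝ) * (m ^ (-(1 / 6) : ℝ) * m ^ (-(1 / 6) : ℝ))) := by
    rw [← rpow_add hm, ← rpow_add hm, ← rpow_add hm, ← rpow_neg_one]; norm_num
  have anti {x : ℝ} (hx : 0 < x) (hxm : x ≤ m) (s : ℝ) (hs : 0 ≤ s) : m ^ (-s) ≤ x ^ (-s) :=
    rpow_le_rpow_of_nonpos hx hxm (neg_nonpos.2 hs)
  rw [hsplit]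
  gcongr ?_ * (?_ * (?_ * ?_)) <;> apply anti <;> first | assumption | norm_num

lemma integrand_le_rpow_neg_half_mul_prod {q₁ q₂ q₃ T M a₁ a₂ a₃ : ℝ}
    (hq₁ : 2 ≤ q₁) (hq₂ : 2 ≤ q₂) (hq₃ : 2 ≤ q₃) (hT : 1 ≤ T)
    (hTa : T ≤ max |a₁| (max |a₂| |a₃|)) (haM : max |a₁| (max |a₂| |a₃|) ≤ M) :
    max 1 |a₁| ^ (1 - q₁) * M ^ (1 - q₂ - q₃) *
        (|a₁| ^ (q₁ - 1) * |a₂| ^ (q₂ - 1) * |a₃| ^ (q₃ - 1)) ≤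
      T ^ (-(1 / 2) : ℝ) * (|a₁| * max 1 |a₁| ^ (-(7 / 6) : ℝ) *
        (|a₂| * max 1 |a₂| ^ (-(7 / 6) : ℝ) * (|a₃| * max 1 |a₃| ^ (-(7 / 6) : ℝ)))) := by
  set m := max |a₁| (max |a₂| |a₃|)
  have hm : 1 ≤ m := hT.trans hTa
  have hM : 0 < M := one_pos.trans_le (hm.trans haM)
  have hB₁ : max 1 |a₁| ≤ m := max_le hm (le_max_left _ _)
  have hB₂ : max 1 |a₂| ≤ m := max_le hm ((le_max_left _ _).trans (le_max_right _ _))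
  have hB₃ : max 1 |a₃| ≤ m := max_le hm ((le_max_right _ _).trans (le_max_right _ _))
  have e₁ := abs_rpow_mul_rpow_neg_le a₁ (by linarith : 1 ≤ q₁ - 1) le_rfl
  have e₂ := abs_rpow_mul_rpow_neg_le a₂ (by linarith : 1 ≤ q₂ - 1) (hB₂.trans haM)
  have e₃ := abs_rpow_mul_rpow_neg_le a₃ (by linarith : 1 ≤ q₃ - 1) (hB₃.trans haM)
  have e₄ : M⁻¹ ≤ _ := (inv_anti₀ (by linarith) haM).trans <|
    inv_le_rpow_neg_half_mul (by linarith) hTa (lt_max_of_lt_left one_pos) hB₁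
      (lt_max_of_lt_left one_pos) hB₂ (lt_max_of_lt_left one_pos) hB₃
  have weight_eq (t : ℝ) : |t| / max 1 |t| * max 1 |t| ^ (-(1 / 6) : ℝ) =
      |t| * max 1 |t| ^ (-(7 / 6) : ℝ) := by
    rw [div_eq_mul_inv, ← rpow_neg_one, mul_assoc, ← rpow_add (lt_max_of_lt_left one_pos)]
    norm_num
  calc _ = |a₁| ^ (q₁ - 1) * max 1 |a₁| ^ (-(q₁ - 1)) *
        (|a₂| ^ (q₂ - 1) * M ^ (-(q₂ - 1)) * (|a₃| ^ (q₃ - 1) * M ^ (-(q₃ - 1)) * M⁻¹)) := by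
        have hsplit : M ^ (1 - q₂ - q₃) = M ^ (-(q₂ - 1)) * M ^ (-(q₃ - 1)) * M⁻¹ := by
          rw [← rpow_neg_one, ← rpow_add hM, ← rpow_add hM]; ring_nf
        rw [hsplit, ← neg_sub q₁]; ring
    _ ≤ |a₁| / max 1 |a₁| * (|a₂| / max 1 |a₂| * (|a₃| / max 1 |a₃| *
        (T ^ (-(1 / 2) : ℝ) * (max 1 |a₁| ^ (-(1 / 6) : ℝ) *
          (max 1 |a₂| ^ (-(1 / 6) : ℝ) * max 1 |a₃| ^ (-(1 / 6) : ℝ)))))) := by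
        gcongr
    _ = _ := by
        rw [← weight_eq, ← weight_eq, ← weight_eq]; ring

lemma setLIntegral_integrand_le {q₁ q₂ q₃ T : ℝ} (hq₁ : 2 ≤ q₁) (hq₂ : 2 ≤ q₂) (hq₃ : 2 ≤ q₃)
    (hT : 1 ≤ T) (M : ℝ × ℝ × ℝ → ℝ) (hM : ∀ a, max |a.1| (max |a.2.1| |a.2.2|) ≤ M a) :
    ∫⁻ a in {p : ℝ × ℝ × ℝ | T ≤ max |p.1| (max |p.2.1| |p.2.2|)},
        ENNReal.ofReal (max 1 |a.1| ^ (1 - q₁) * M a ^ (1 - q₂ - q₃) *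
          (|a.1| ^ (q₁ - 1) * |a.2.1| ^ (q₂ - 1) * |a.2.2| ^ (q₃ - 1))) ∂mulHaar3 ≤
      ENNReal.ofReal (T ^ (-(1 / 2) : ℝ)) *
        (∫⁻ t, ENNReal.ofReal (|t| * max 1 |t| ^ (-(7 / 6) : ℝ)) ∂mulHaar) ^ 3 := by
  set w : ℝ → ENNReal := fun t => ENNReal.ofReal (|t| * max 1 |t| ^ (-(7 / 6) : ℝ))
  have hw : AEMeasurable w mulHaar := by fun_prop
  calc _ ≤ ∫⁻ a in {p : ℝ × ℝ × ℝ | T ≤ max |p.1| (max |p.2.1| |p.2.2|)},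
          ENNReal.ofReal (T ^ (-(1 / 2) : ℝ)) * (w a.1 * (w a.2.1 * w a.2.2)) ∂mulHaar3 := by
        refine setLIntegral_mono' (measurableSet_le measurable_const (by fun_prop)) fun a ha => ?_
        refine (ENNReal.ofReal_le_ofReal
          (integrand_le_rpow_neg_half_mul_prod hq₁ hq₂ hq₃ hT ha (hM a))).trans_eq ?_
        simp only [w]
        rw [← ENNReal.ofReal_mul (by positivity), ← ENNReal.ofReal_mul (by positivity),
          ← ENNReal.ofReal_mul (by positivity)]
    _ ≤ ∫⁻ a, ENNReal.ofReal (T ^ (-(1 / 2) : ℝ)) * (w a.1 * (w a.2.1 * w a.2.2)) ∂mulHaar3 :=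
        setLIntegral_le_lintegral _ _
    _ = _ := by
        rw [lintegral_const_mul' _ _ ENNReal.ofReal_ne_top, lintegral_mulHaar3_mul hw hw hw]
        ring

theorem stmt15_general
    (d₁ d₂ d₃ : ℕ)
    (hd₁ : 4 ≤ d₁) (hd₂ : 4 ≤ d₂) (hd₃ : 4 ≤ d₃) :
    ∀ α : ℝ, 0 < α →
      ∃ β : ℝ, 0 < β ∧ ∃ C : ℝ, 0 < C ∧
        ∀ c : ℝ, 1 < |c| →
          (∫⁻ a in {p : ℝ × ℝ × ℝ | |c| ^ α ≤ max |p.1| (max |p.2.1| |p.2.2|)},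
              ENNReal.ofReal
                (max 1 |a.1| ^ (1 - (d₁ : ℝ) / 2) *
                  max (max 1 |a.1 * a.2.1 * a.2.2 / c|) (max |a.1| (max |a.2.1| |a.2.2|)) ^
                    (1 - (d₂ : ℝ) / 2 - (d₃ : ℝ) / 2) *
                  (|a.1| ^ ((d₁ : ℝ) / 2 - 1) * |a.2.1| ^ ((d₂ : ℝ) / 2 - 1) *
                    |a.2.2| ^ ((d₃ : ℝ) / 2 - 1))) ∂mulHaar3)
          ≤ ENNReal.ofReal (C * |c| ^ (-β)) := by
  intro α hα
  set I := (∫⁻ t, ENNReal.ofReal (|t| * max 1 |t| ^ (-(7 / 6) : ℝ)) ∂mulHaar) ^ 3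
  have hI : I ≠ ⊤ :=
    ENNReal.pow_ne_top (lintegral_abs_mul_max_one_rpow_neg_lt_top (by norm_num)).ne
  have hq {d : ℕ} (hd : 4 ≤ d) : (2 : ℝ) ≤ d / 2 := by
    rw [le_div_iff₀ two_pos]; exact_mod_cast hd
  refine ⟨α / 2, by positivity, I.toReal + 1, by positivity, fun c hc => ?_⟩
  calc _ ≤ ENNReal.ofReal ((|c| ^ α) ^ (-(1 / 2) : ℝ)) * I :=
        setLIntegral_integrand_le (hq hd₁) (hq hd₂) (hq hd₃) (one_le_rpow hc.le hα.le)
          (fun a => max (max 1 |a.1 * a.2.1 * a.2.2 / c|) (max |a.1| (max |a.2.1| |a.2.2|)))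
          fun a => le_max_right _ _
    _ ≤ ENNReal.ofReal ((|c| ^ α) ^ (-(1 / 2) : ℝ)) * ENNReal.ofReal (I.toReal + 1) := by
        gcongr
        exact (ENNReal.le_ofReal_iff_toReal_le hI (by positivity)).2 (by linarith)
    _ = _ := by
        rw [← ENNReal.ofReal_mul (by positivity), mul_comm, ← rpow_mul (abs_nonneg c)]
        ring_nf

/-- Corollary 9.12 (archimedean case `F = ℝ`). -/
theorem stmt15
    (d₁ d₂ d₃ : ℕ) (hd₁e : Even d₁) (hd₂e : Even d₂) (hd₃e : Even d₃)
    (hd₁ : 4 ≤ d₁) (hd₂ : 4 ≤ d₂) (hd₃ : 4 ≤ d₃) :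
    ∀ α : ℝ, 0 < α →
      ∃ β : ℝ, 0 < β ∧ ∃ C : ℝ, 0 < C ∧
        ∀ c : ℝ, 1 < |c| →
          (∫⁻ a in {p : ℝ × ℝ × ℝ | |c| ^ α ≤ max |p.1| (max |p.2.1| |p.2.2|)},
              ENNReal.ofReal
                (max 1 |a.1| ^ (1 - (d₁ : ℝ) / 2) *
                  max (max 1 |a.1 * a.2.1 * a.2.2 / c|) (max |a.1| (max |a.2.1| |a.2.2|)) ^
                    (1 - (d₂ : ℝ) / 2 - (d₃ : ℝ) / 2) *
                  (|a.1| ^ ((d₁ : ℝ) / 2 - 1) * |a.2.1| ^ ((d₂ : ℝ) / 2 - 1) *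
                    |a.2.2| ^ ((d₃ : ℝ) / 2 - 1))) ∂mulHaar3)
          ≤ ENNReal.ofReal (C * |c| ^ (-β)) :=
  stmt15_general d₁ d₂ d₃ hd₁ hd₂ hd₃
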